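/- arXiv:2508.10154 — 8 statements merged into one kernel-verified Lean document; each statement's English description precedes it below -/
import Mathlib

section
/- For every real t ≥ 0, t - t^3/3 ≤ tanh(t) ≤ t - (t^3/3) * exp(-t). -/
/-!
Both bounds are compared after multiplying by `cosh t > 0`: each difference `φ t * cosh t - sinh t`
vanishes at `0` and is monotone on `[0, ∞)`. For the lower bound the derivative is
`t (t cosh t - sinh t) + t³ sinh t / 3`. For the upper bound it is `t e^{-2t} Q(e^t, t) / 6` with
`Q(a, t) = 3a³ - 3a - 3ta² + 2t² - 3t`, which is increasing in `a` once `a ≥ 1 + t` and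
satisfies `Q(1 + t, t) = 5t²`, so `e^t ≥ 1 + t` makes it nonnegative.
-/

open Real Set

lemma le_of_hasDerivAt_nonneg {f f' : ℝ → ℝ} {a b : ℝ} (hf : ∀ x, HasDerivAt f (f' x) x)
    (hf' : ∀ x, a < x → 0 ≤ f' x) (hab : a ≤ b) : f a ≤ f b := by
  have hmono : MonotoneOn f (Ici a) := by
    refine monotoneOn_of_hasDerivWithinAt_nonneg (convex_Ici a)
      (fun x _ ↦ (hf x).continuousAt.continuousWithinAt)
      (fun x _ ↦ (hf x).hasDerivWithinAt) fun x hx ↦ ?_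
    rw [interior_Ici] at hx
    exact hf' x hx
  exact hmono self_mem_Ici hab hab

lemma sinh_le_mul_cosh {t : ℝ} (ht : 0 ≤ t) : sinh t ≤ t * cosh t := by
  have hderiv (x : ℝ) : HasDerivAt (fun x ↦ x * cosh x - sinh x) (x * sinh x) x := by
    refine ((hasDerivAt_id' x).mul (hasDerivAt_cosh x)).sub (hasDerivAt_sinh x) |>.congr_deriv ?_
    ring
  have := le_of_hasDerivAt_nonneg hderiv
    (fun x hx ↦ mul_nonneg hx.le (sinh_nonneg_iff.2 hx.le)) ht
  simp only [zero_mul, sinh_zero, sub_zero] at this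
  linarith

lemma sub_cube_div_three_mul_cosh_le_sinh {t : ℝ} (ht : 0 ≤ t) :
    (t - t ^ 3 / 3) * cosh t ≤ sinh t := by
  have hderiv (x : ℝ) : HasDerivAt (fun x ↦ sinh x - (x - x ^ 3 / 3) * cosh x)
      (x * (x * cosh x - sinh x) + x ^ 3 * sinh x / 3) x := by
    have hpoly : HasDerivAt (fun x : ℝ ↦ x - x ^ 3 / 3) (1 - x ^ 2) x := by
      refine (hasDerivAt_id' x).sub ((hasDerivAt_pow 3 x).div_const 3) |>.congr_deriv ?_
      ring
    refine (hasDerivAt_sinh x).sub (hpoly.mul (hasDerivAt_cosh x)) |>.congr_deriv ?_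
    ring
  have hderiv_nonneg (x : ℝ) (hx : 0 < x) :
      0 ≤ x * (x * cosh x - sinh x) + x ^ 3 * sinh x / 3 := by
    have := sub_nonneg.2 (sinh_le_mul_cosh hx.le)
    have := sinh_nonneg_iff.2 hx.le
    positivity
  have := le_of_hasDerivAt_nonneg hderiv hderiv_nonneg ht
  simp only [sinh_zero, cosh_zero] at this
  linarith

lemma cubic_nonneg_of_one_add_le {a x : ℝ} (hx : 0 ≤ x) (ha : 1 + x ≤ a) :
    0 ≤ 3 * a ^ 3 - 3 * a - 3 * x * a ^ 2 + 2 * x ^ 2 - 3 * x := by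
  -- `Q(a) - Q(b) = (a - b) (3 (a² + ab + b²) - 3 - 3x (a + b))` with `b = 1 + x`; `Q(b) = 5x²`.
  have hfactor : 0 ≤ 3 * (a ^ 2 + a * (1 + x) + (1 + x) ^ 2) - 3 - 3 * x * (a + (1 + x)) := by
    nlinarith
  have hdiff : 0 ≤ (a - (1 + x)) *
      (3 * (a ^ 2 + a * (1 + x) + (1 + x) ^ 2) - 3 - 3 * x * (a + (1 + x))) :=
    mul_nonneg (sub_nonneg.2 ha) hfactor
  nlinarith [sq_nonneg x]

lemma sinh_le_sub_cube_div_three_mul_exp_neg_mul_cosh {t : ℝ} (ht : 0 ≤ t) :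
    sinh t ≤ (t - t ^ 3 / 3 * exp (-t)) * cosh t := by
  have hderiv (x : ℝ) : HasDerivAt (fun x ↦ (x - x ^ 3 / 3 * exp (-x)) * cosh x - sinh x)
      (x * exp (-x) ^ 2 / 6 *
        (3 * exp x ^ 3 - 3 * exp x - 3 * x * exp x ^ 2 + 2 * x ^ 2 - 3 * x)) x := by
    have hexp : HasDerivAt (fun x ↦ exp (-x)) (-exp (-x)) x := by
      simpa using (hasDerivAt_neg x).exp
    have hphi := (hasDerivAt_id' x).sub (((hasDerivAt_pow 3 x).div_const 3).mul hexp)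
    refine (hphi.mul (hasDerivAt_cosh x)).sub (hasDerivAt_sinh x) |>.congr_deriv ?_
    simp only [Pi.sub_apply, Pi.mul_apply]
    rw [sinh_eq, cosh_eq, exp_neg]
    field_simp
    ring
  have hderiv_nonneg (x : ℝ) (hx : 0 < x) : 0 ≤ x * exp (-x) ^ 2 / 6 *
      (3 * exp x ^ 3 - 3 * exp x - 3 * x * exp x ^ 2 + 2 * x ^ 2 - 3 * x) :=
    mul_nonneg (by positivity) (cubic_nonneg_of_one_add_le hx.le (by linarith [add_one_le_exp x]))
  have := le_of_hasDerivAt_nonneg hderiv hderiv_nonneg ht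
  simp only [sinh_zero, cosh_zero] at this
  linarith

theorem tanh_cubic_bounds (t : ℝ) (ht : 0 ≤ t) :
    t - t ^ 3 / 3 ≤ Real.tanh t ∧ Real.tanh t ≤ t - t ^ 3 / 3 * Real.exp (-t) := by
  rw [tanh_eq_sinh_div_cosh, le_div_iff₀ (cosh_pos t), div_le_iff₀ (cosh_pos t)]
  exact ⟨sub_cube_div_three_mul_cosh_le_sinh ht,
    sinh_le_sub_cube_div_three_mul_exp_neg_mul_cosh ht⟩
end

section
/- For every real t ≥ 0, t^2 - (2/3) t^4 ≤ tanh(t)^2 ≤ t^2 - (2/3) t^4 exp(-t). -/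
/-!
Every inequality is obtained by comparing derivatives on `[0, ∞)`, using `tanh' = 1 - tanh²`.
The chain `tanh x ≤ x`, `x - x³/3 ≤ tanh x`, `x² - 2x⁴/3 ≤ tanh² x`, `x³/3 - 2x⁵/15 ≤ x - tanh x`
feeds itself, each bound giving the derivative estimate for the next. For the upper bound the
derivative comparison reads `x³(4 - x)e⁻ˣ/3 ≤ x - tanh x + tanh³ x`; for `x ≤ 1` it follows
from the chain together with `e⁻ˣ ≤ 1/(1 + x + x²/2)`, and for `x ≥ 1` from `y - y³ ≤ 2/5` and
`e⁻ˣ ≤ 1/(1 + x + x²/2 + x³/6)`.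
-/

open Real

theorem le_of_hasDerivAt_le {f g f' g' : ℝ → ℝ} {a b : ℝ}
    (hf : ∀ x, HasDerivAt f (f' x) x) (hg : ∀ x, HasDerivAt g (g' x) x)
    (ha : f a ≤ g a) (hderiv : ∀ x, a ≤ x → f' x ≤ g' x) (hab : a ≤ b) : f b ≤ g b :=
  image_le_of_deriv_right_le_deriv_boundary (fun x _ => (hf x).continuousAt.continuousWithinAt)
    (fun x _ => (hf x).hasDerivWithinAt) ha (fun x _ => (hg x).continuousAt.continuousWithinAt)
    (fun x _ => (hg x).hasDerivWithinAt) (fun x hx => hderiv x hx.1) ⟨hab, le_rfl⟩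

theorem hasDerivAt_tanh (x : ℝ) : HasDerivAt tanh (1 - tanh x ^ 2) x := by
  have hcosh : cosh x ≠ 0 := (cosh_pos x).ne'
  have h := (hasDerivAt_sinh x).div (hasDerivAt_cosh x) hcosh
  rw [show tanh = sinh / cosh from funext tanh_eq_sinh_div_cosh]
  refine h.congr_deriv ?_
  rw [Pi.div_apply]
  field_simp

theorem tanh_nonneg {x : ℝ} (hx : 0 ≤ x) : 0 ≤ tanh x := by
  rw [tanh_eq_sinh_div_cosh]
  exact div_nonneg (sinh_nonneg_iff.mpr hx) (cosh_pos x).le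

theorem tanh_le_self {x : ℝ} (hx : 0 ≤ x) : tanh x ≤ x := by
  refine le_of_hasDerivAt_le (f' := fun y => 1 - tanh y ^ 2) (g' := fun _ => 1)
    hasDerivAt_tanh hasDerivAt_id (by simp) (fun y _ => ?_) hx
  simp only [sub_le_self_iff]
  positivity

theorem sub_pow_three_div_three_le_tanh {x : ℝ} (hx : 0 ≤ x) : x - x ^ 3 / 3 ≤ tanh x := by
  refine le_of_hasDerivAt_le (f' := fun y => 1 - y ^ 2) (g' := fun y => 1 - tanh y ^ 2)
    (fun y => ((hasDerivAt_id y).sub ((hasDerivAt_pow 3 y).div_const 3)).congr_deriv (by ring))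
    hasDerivAt_tanh (by simp) (fun y hy => ?_) hx
  have := pow_le_pow_left₀ (tanh_nonneg hy) (tanh_le_self hy) 2
  linarith

theorem sq_sub_le_tanh_sq {x : ℝ} (hx : 0 ≤ x) : x ^ 2 - 2 / 3 * x ^ 4 ≤ tanh x ^ 2 := by
  rcases le_total (x ^ 3 / 3) x with h | h
  · have := pow_le_pow_left₀ (sub_nonneg.mpr h) (sub_pow_three_div_three_le_tanh hx) 2
    nlinarith [sq_nonneg (x ^ 3)]
  · nlinarith [sq_nonneg (tanh x), sq_nonneg x]

theorem sub_le_self_sub_tanh {x : ℝ} (hx : 0 ≤ x) :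
    x ^ 3 / 3 - 2 * x ^ 5 / 15 ≤ x - tanh x := by
  refine le_of_hasDerivAt_le (f' := fun y => y ^ 2 - 2 / 3 * y ^ 4)
    (g' := fun y => 1 - (1 - tanh y ^ 2))
    (fun y => (((hasDerivAt_pow 3 y).div_const 3).sub
      (((hasDerivAt_pow 5 y).const_mul 2).div_const 15)).congr_deriv (by ring))
    (fun y => (hasDerivAt_id y).sub (hasDerivAt_tanh y)) (by simp)
    (fun y hy => by simpa using sq_sub_le_tanh_sq hy) hx

theorem sub_cube_le_two_fifths {y : ℝ} (hy : 0 ≤ y) : y - y ^ 3 ≤ 2 / 5 := by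
  -- `(y - a)²(y + 2a) ≥ 0` with `a = 7/12 ≈ 1/√3`, where `y - y³` attains its maximum `≈ 0.385`
  nlinarith [mul_nonneg (sq_nonneg (y - 7 / 12)) (by linarith : (0 : ℝ) ≤ y + 7 / 6)]

theorem cubic_le_exp_of_nonneg {x : ℝ} (hx : 0 ≤ x) : 1 + x + x ^ 2 / 2 + x ^ 3 / 6 ≤ exp x := by
  have := sum_le_exp_of_nonneg hx 4
  simp only [Finset.sum_range_succ, Finset.sum_range_zero, Nat.factorial] at this
  norm_num at this
  linarith

theorem mul_exp_neg_le {a b p x : ℝ} (hb : 0 ≤ b) (hab : a ≤ b * p) (hp : p ≤ exp x) :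
    a * exp (-x) ≤ b := by
  calc a * exp (-x) ≤ b * p * exp (-x) := by gcongr
    _ ≤ b * exp x * exp (-x) := by gcongr
    _ = b := by rw [mul_assoc, ← exp_add, add_neg_cancel, exp_zero, mul_one]

theorem cube_mul_exp_neg_le_of_le_one {x : ℝ} (hx : 0 ≤ x) (hx1 : x ≤ 1) :
    x ^ 3 * (4 - x) / 3 * exp (-x) ≤ x - tanh x + tanh x ^ 3 := by
  have hcub : 0 ≤ x - x ^ 3 / 3 := by
    nlinarith [mul_nonneg hx (sub_nonneg.mpr hx1), mul_nonneg (sq_nonneg x) (sub_nonneg.mpr hx1)]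
  have htanh_cube : (x - x ^ 3 / 3) ^ 3 ≤ tanh x ^ 3 :=
    pow_le_pow_left₀ hcub (sub_pow_three_div_three_le_tanh hx) 3
  have hpoly_nonneg : 0 ≤ x ^ 3 / 3 - 2 * x ^ 5 / 15 + (x - x ^ 3 / 3) ^ 3 := by
    nlinarith [pow_nonneg hcub 3,
      mul_nonneg (pow_nonneg hx 3) (by nlinarith : (0 : ℝ) ≤ 1 - 2 * x ^ 2 / 5)]
  have hpoly : x ^ 3 * (4 - x) / 3 ≤
      (x ^ 3 / 3 - 2 * x ^ 5 / 15 + (x - x ^ 3 / 3) ^ 3) * (1 + x + x ^ 2 / 2) := by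
    nlinarith [pow_nonneg hx 3, mul_nonneg (pow_nonneg hx 3) hx,
      mul_nonneg (mul_nonneg (pow_nonneg hx 3) hx) hx, sq_nonneg x,
      mul_nonneg (pow_nonneg hx 5) (by linarith : (0 : ℝ) ≤ 1 - x),
      mul_nonneg (pow_nonneg hx 4) (by linarith : (0 : ℝ) ≤ 1 - x)]
  have := mul_exp_neg_le hpoly_nonneg hpoly (quadratic_le_exp_of_nonneg hx)
  linarith [sub_le_self_sub_tanh hx]

theorem cube_mul_exp_neg_le_of_one_le {x y : ℝ} (hx : 1 ≤ x) (hy : 0 ≤ y) :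
    x ^ 3 * (4 - x) / 3 * exp (-x) ≤ x - y + y ^ 3 := by
  have hpoly : x ^ 3 * (4 - x) / 3 ≤ (x - 2 / 5) * (1 + x + x ^ 2 / 2 + x ^ 3 / 6) := by
    nlinarith [sq_nonneg (x - 2), sq_nonneg (x - 1), mul_nonneg (sub_nonneg.mpr hx) (sq_nonneg x)]
  have := mul_exp_neg_le (by linarith) hpoly (cubic_le_exp_of_nonneg (by linarith))
  linarith [sub_cube_le_two_fifths hy]

theorem tanh_sq_le_sq_sub_mul_exp_neg {x : ℝ} (hx : 0 ≤ x) :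
    tanh x ^ 2 ≤ x ^ 2 - 2 / 3 * x ^ 4 * exp (-x) := by
  have hexp (y : ℝ) : HasDerivAt (fun z => exp (-z)) (-exp (-y)) y := by
    simpa using (hasDerivAt_neg y).exp
  refine le_of_hasDerivAt_le (f' := fun y => 2 * tanh y * (1 - tanh y ^ 2))
    (g' := fun y => 2 * y - 2 / 3 * (4 * y ^ 3 - y ^ 4) * exp (-y))
    (fun y => ((hasDerivAt_tanh y).pow 2).congr_deriv (by ring))
    (fun y => ((hasDerivAt_pow 2 y).sub
      (((hasDerivAt_pow 4 y).const_mul (2 / 3)).mul (hexp y))).congr_deriv (by ring))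
    (by simp) (fun y hy => ?_) hx
  rcases le_total y 1 with hy1 | hy1
  · linarith [cube_mul_exp_neg_le_of_le_one hy hy1]
  · linarith [cube_mul_exp_neg_le_of_one_le hy1 (tanh_nonneg hy)]

theorem tanh_sq_bounds (t : ℝ) (ht : 0 ≤ t) :
    t ^ 2 - (2 / 3) * t ^ 4 ≤ Real.tanh t ^ 2 ∧
      Real.tanh t ^ 2 ≤ t ^ 2 - (2 / 3) * t ^ 4 * Real.exp (-t) :=
  ⟨sq_sub_le_tanh_sq ht, tanh_sq_le_sq_sub_mul_exp_neg ht⟩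
end

section
/- For every real t ≥ 0, t^3 - t^5 ≤ tanh(t)^3 ≤ t^3 - t^5 exp(-t). -/
/-!
With `E = exp (2 t)` one has `tanh t = (E - 1) / (E + 1)`, so every bound on `tanh t` is an
inequality between `E` and rational functions of `t`, which Taylor bounds for `exp` turn into
polynomial inequalities. The lower bound follows from the Padé bound `3 t / (3 + t²) ≤ tanh t`.
For the upper bound, on `[0, 13/10]` we use `tanh t ≤ t - t³/3 + 11 t⁴/100`, bounding
`exp (2 t) = exp (2 t / 3) ^ 3` by the Taylor estimate on `[0, 1]`; for `t ≥ 13/10` the crude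
bound `tanh t ≤ 1` suffices, since there `t⁵ e^(-t) ≤ t³ - 1`.
-/

open Real

lemma tanh_eq_exp_two_mul (t : ℝ) : tanh t = (exp (2 * t) - 1) / (exp (2 * t) + 1) := by
  rw [tanh_eq, exp_neg, two_mul, exp_add]
  field_simp

lemma le_tanh_iff {w t : ℝ} : w ≤ tanh t ↔ 1 + w ≤ exp (2 * t) * (1 - w) := by
  rw [tanh_eq_exp_two_mul, le_div_iff₀ (by positivity)]
  constructor <;> intro h <;> linarith

lemma tanh_le_iff {w t : ℝ} : tanh t ≤ w ↔ exp (2 * t) * (1 - w) ≤ 1 + w := by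
  rw [tanh_eq_exp_two_mul, div_le_iff₀ (by positivity)]
  constructor <;> intro h <;> linarith

lemma mul_exp_neg_le_iff {a b t : ℝ} : a * exp (-t) ≤ b ↔ a ≤ b * exp t := by
  rw [exp_neg, ← div_eq_mul_inv, div_le_iff₀ (exp_pos t)]

lemma taylor_quintic_le_exp {x : ℝ} (hx : 0 ≤ x) :
    1 + x + x ^ 2 / 2 + x ^ 3 / 6 + x ^ 4 / 24 + x ^ 5 / 120 ≤ exp x := by
  have h := sum_le_exp_of_nonneg hx 6
  simp only [Finset.sum_range_succ, Finset.sum_range_zero, Nat.factorial] at h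
  norm_num at h
  linarith

lemma exp_le_taylor_quartic {x : ℝ} (hx₀ : 0 ≤ x) (hx₁ : x ≤ 1) :
    exp x ≤ 1 + x + x ^ 2 / 2 + x ^ 3 / 6 + 5 * x ^ 4 / 96 := by
  have h := exp_bound' hx₀ hx₁ (n := 4) (by norm_num)
  simp only [Finset.sum_range_succ, Finset.sum_range_zero, Nat.factorial] at h
  norm_num at h
  linarith

lemma pade_le_exp_mul {x : ℝ} (hx : 0 ≤ x) :
    x ^ 2 + 6 * x + 12 ≤ exp x * (x ^ 2 - 6 * x + 12) := by
  have hq : 0 ≤ x ^ 2 - 6 * x + 12 := by nlinarith [sq_nonneg (x - 3)]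
  calc x ^ 2 + 6 * x + 12
      ≤ (1 + x + x ^ 2 / 2 + x ^ 3 / 6 + x ^ 4 / 24 + x ^ 5 / 120) * (x ^ 2 - 6 * x + 12) := by
        nlinarith [pow_nonneg hx 5, pow_nonneg hx 6, pow_nonneg hx 7]
    _ ≤ exp x * (x ^ 2 - 6 * x + 12) := by gcongr; exact taylor_quintic_le_exp hx

lemma three_mul_div_le_tanh {t : ℝ} (ht : 0 ≤ t) : 3 * t / (3 + t ^ 2) ≤ tanh t := by
  have h3 : (0 : ℝ) < 3 + t ^ 2 := by positivity
  have hpade := pade_le_exp_mul (by linarith : 0 ≤ 2 * t)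
  rw [le_tanh_iff,
    show 1 + 3 * t / (3 + t ^ 2) = ((2 * t) ^ 2 + 6 * (2 * t) + 12) / (4 * (3 + t ^ 2)) by
      field_simp; ring,
    show 1 - 3 * t / (3 + t ^ 2) = ((2 * t) ^ 2 - 6 * (2 * t) + 12) / (4 * (3 + t ^ 2)) by
      field_simp; ring,
    ← mul_div_assoc]
  gcongr

lemma pow_three_sub_pow_five_le {t : ℝ} (ht : 0 ≤ t) :
    t ^ 3 - t ^ 5 ≤ (3 * t / (3 + t ^ 2)) ^ 3 := by
  rw [div_pow, le_div_iff₀ (by positivity)]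
  nlinarith [pow_nonneg ht 7, pow_nonneg ht 9, pow_nonneg ht 11]

lemma tanh_le_quartic {t : ℝ} (ht₀ : 0 ≤ t) (ht₁ : t ≤ 13 / 10) :
    tanh t ≤ t - t ^ 3 / 3 + 11 / 100 * t ^ 4 := by
  set W := t - t ^ 3 / 3 + 11 / 100 * t ^ 4 with hW
  set p := 1 + 2 / 3 * t + 2 / 9 * t ^ 2 + 4 / 81 * t ^ 3 + 5 / 486 * t ^ 4 with hp
  have hexp : exp (2 * t) ≤ p ^ 3 := by
    have h := exp_le_taylor_quartic (x := 2 * t / 3) (by linarith) (by linarith)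
    calc exp (2 * t) = exp (2 * t / 3) ^ 3 := by rw [← exp_nat_mul]; ring_nf
      _ ≤ p ^ 3 := by gcongr; linarith
  have h_one_sub : 0 ≤ 1 - W := by
    nlinarith [mul_nonneg (mul_nonneg ht₀ ht₀) (sub_nonneg.2 ht₁),
      mul_nonneg ht₀ (sub_nonneg.2 ht₁), sq_nonneg t, pow_nonneg ht₀ 3, pow_nonneg ht₀ 4]
  -- `1 + W - p ^ 3 * (1 - W)` is `t ^ 4` times this cubic plus terms of degree `8` to `16`
  -- with positive coefficients.
  have hcub : 0 ≤ 433 / 2025 - 92 / 2025 * t - 4643 / 109350 * t ^ 2 - 4061 / 328050 * t ^ 3 := by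
    nlinarith [mul_nonneg (mul_nonneg ht₀ ht₀) (sub_nonneg.2 ht₁),
      mul_nonneg ht₀ (sub_nonneg.2 ht₁), sq_nonneg t]
  rw [tanh_le_iff]
  calc exp (2 * t) * (1 - W) ≤ p ^ 3 * (1 - W) := by gcongr
    _ ≤ 1 + W := by
      rw [hW, hp]
      nlinarith [mul_nonneg (pow_nonneg ht₀ 4) hcub, pow_nonneg ht₀ 8, pow_nonneg ht₀ 9,
        pow_nonneg ht₀ 10, pow_nonneg ht₀ 11, pow_nonneg ht₀ 12, pow_nonneg ht₀ 13,
        pow_nonneg ht₀ 14, pow_nonneg ht₀ 15, pow_nonneg ht₀ 16]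

lemma quartic_cube_le {t : ℝ} (ht₀ : 0 ≤ t) (ht₁ : t ≤ 13 / 10) :
    (t - t ^ 3 / 3 + 11 / 100 * t ^ 4) ^ 3 ≤ t ^ 3 - t ^ 5 * exp (-t) := by
  set W := t - t ^ 3 / 3 + 11 / 100 * t ^ 4 with hW
  have hpow (n : ℕ) (hn : 2 ≤ n) : t ^ n ≤ (13 / 10) ^ (n - 2) * t ^ 2 := by
    obtain ⟨k, rfl⟩ := Nat.exists_eq_add_of_le hn
    rw [pow_add, mul_comm, Nat.add_sub_cancel_left]
    gcongr
  -- `(t ^ 3 - W ^ 3) * S - t ^ 5`, with `S` the quartic Taylor polynomial of `exp`, is `t ^ 6`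
  -- times this plus terms of degree `9` to `15` with positive coefficients.
  have hcert : 0 ≤ 67 / 100 - 49 / 300 * t - 67 / 600 * t ^ 2 - 767 / 540000 * t ^ 5
      - 220547 / 162000000 * t ^ 7 - 3179 / 18000000 * t ^ 8 - 1331 / 24000000 * t ^ 10 := by
    nlinarith [hpow 5 (by norm_num), hpow 7 (by norm_num), hpow 8 (by norm_num),
      hpow 10 (by norm_num), mul_nonneg ht₀ (sub_nonneg.2 ht₁), sq_nonneg t]
  have hpoly : t ^ 5 ≤ (t ^ 3 - W ^ 3) * (1 + t + t ^ 2 / 2 + t ^ 3 / 6 + t ^ 4 / 24) := by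
    rw [hW]
    nlinarith [mul_nonneg (pow_nonneg ht₀ 6) hcert, pow_nonneg ht₀ 9, pow_nonneg ht₀ 10,
      pow_nonneg ht₀ 12, pow_nonneg ht₀ 15]
  have hS : (0 : ℝ) < 1 + t + t ^ 2 / 2 + t ^ 3 / 6 + t ^ 4 / 24 := by positivity
  have hexp : t ^ 5 * exp (-t) ≤ t ^ 3 - W ^ 3 := by
    rw [mul_exp_neg_le_iff]
    refine hpoly.trans ?_
    gcongr
    · exact nonneg_of_mul_nonneg_left ((pow_nonneg ht₀ 5).trans hpoly) hS
    · linarith [taylor_quintic_le_exp ht₀, pow_nonneg ht₀ 5]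
  linarith

lemma one_le_sub_pow_five_mul_exp_neg {t : ℝ} (ht : 13 / 10 ≤ t) :
    1 ≤ t ^ 3 - t ^ 5 * exp (-t) := by
  have h := sub_nonneg.2 ht
  have hpoly :
      t ^ 5 ≤ (t ^ 3 - 1) * (1 + t + t ^ 2 / 2 + t ^ 3 / 6 + t ^ 4 / 24 + t ^ 5 / 120) := by
    nlinarith [mul_nonneg h h, pow_nonneg h 3, pow_nonneg h 4, pow_nonneg h 5, pow_nonneg h 6,
      pow_nonneg h 7, pow_nonneg h 8]
  have hexp : t ^ 5 * exp (-t) ≤ t ^ 3 - 1 := by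
    rw [mul_exp_neg_le_iff]
    refine hpoly.trans ?_
    gcongr
    · nlinarith
    · exact taylor_quintic_le_exp (by linarith)
  linarith

theorem tanh_cube_bounds (t : ℝ) (ht : 0 ≤ t) :
    t ^ 3 - t ^ 5 ≤ Real.tanh t ^ 3 ∧ Real.tanh t ^ 3 ≤ t ^ 3 - t ^ 5 * Real.exp (-t) := by
  have hpade := three_mul_div_le_tanh ht
  have hpade_nonneg : 0 ≤ 3 * t / (3 + t ^ 2) := by positivity
  have htanh_nonneg : 0 ≤ tanh t := hpade_nonneg.trans hpade
  refine ⟨(pow_three_sub_pow_five_le ht).trans (pow_le_pow_left₀ hpade_nonneg hpade 3), ?_⟩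
  rcases le_total t (13 / 10) with hsmall | hlarge
  · calc tanh t ^ 3 ≤ (t - t ^ 3 / 3 + 11 / 100 * t ^ 4) ^ 3 :=
          pow_le_pow_left₀ htanh_nonneg (tanh_le_quartic ht hsmall) 3
      _ ≤ t ^ 3 - t ^ 5 * exp (-t) := quartic_cube_le ht hsmall
  · calc tanh t ^ 3 ≤ 1 := pow_le_one₀ htanh_nonneg (tanh_lt_one t).le
      _ ≤ t ^ 3 - t ^ 5 * exp (-t) := one_le_sub_pow_five_mul_exp_neg hlarge
end

section
/- For all real ν and t, 1 + tanh(ν)^2 * tanh(t)^2 ≤ 1 / (1 - tanh(ν)^2 * tanh(t)^2) ≤ 1 + tanh(ν)^2 * sinh(t)^2. -/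
/-!
With `a = tanh² ν` and `b = tanh² t` in `[0, 1)`, the lower bound is `(1 + ab)(1 - ab) ≤ 1`.
For the upper bound, `sinh² t = b / (1 - b)` and `1 / (1 - ab) = 1 + ab / (1 - ab)`, so it
reduces to `1 - b ≤ 1 - ab`, i.e. `a ≤ 1`.
-/

open Real

theorem one_add_le_one_div_one_sub {x : ℝ} (hx : x < 1) : 1 + x ≤ 1 / (1 - x) := by
  rw [le_div_iff₀ (sub_pos.mpr hx)]
  nlinarith [sq_nonneg x]

theorem one_div_one_sub_mul_le {a b : ℝ} (ha₀ : 0 ≤ a) (ha₁ : a ≤ 1) (hb₀ : 0 ≤ b)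
    (hb₁ : b < 1) : 1 / (1 - a * b) ≤ 1 + a * (b / (1 - b)) := by
  have hb : 0 < 1 - b := sub_pos.mpr hb₁
  have hab : 1 - b ≤ 1 - a * b := by nlinarith
  have hab₀ : 1 - a * b ≠ 0 := (hb.trans_le hab).ne'
  calc 1 / (1 - a * b) = 1 + a * b / (1 - a * b) := by
        field_simp
        ring
    _ ≤ 1 + a * b / (1 - b) := by gcongr
    _ = 1 + a * (b / (1 - b)) := by rw [mul_div_assoc]

theorem Real.sinh_sq_eq_tanh_sq_div (x : ℝ) : sinh x ^ 2 = tanh x ^ 2 / (1 - tanh x ^ 2) := by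
  have hc : cosh x ≠ 0 := (cosh_pos x).ne'
  rw [tanh_eq_sinh_div_cosh, div_pow, one_sub_div (pow_ne_zero 2 hc), cosh_sq x]
  field_simp
  ring

theorem denominator_bounds (ν t : ℝ) :
    1 + Real.tanh ν ^ 2 * Real.tanh t ^ 2 ≤ 1 / (1 - Real.tanh ν ^ 2 * Real.tanh t ^ 2) ∧
      1 / (1 - Real.tanh ν ^ 2 * Real.tanh t ^ 2) ≤ 1 + Real.tanh ν ^ 2 * Real.sinh t ^ 2 := by
  have hν := tanh_sq_lt_one ν
  have ht := tanh_sq_lt_one t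
  refine ⟨one_add_le_one_div_one_sub (mul_lt_one_of_nonneg_of_lt_one_left (sq_nonneg _) hν ht.le),
    ?_⟩
  rw [sinh_sq_eq_tanh_sq_div]
  exact one_div_one_sub_mul_le (sq_nonneg _) hν.le (sq_nonneg _) ht
end

section
/- Let X be a real random variable with probability density f(x) = K₀(|x|)/π, where K₀ is the modified Bessel function of the second kind of order 0. Then for every α ∈ [0, 1), E[exp(-α|X|)] = (2/π) · arccos(α)/√(1 - α²) and E[cosh(αX)] = 1/√(1 - α²). -/
open Real MeasureTheory

/-- Modified Bessel function of the second kind of order 0, via its integral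
representation `K₀(x) = ∫₀^∞ exp(-x cosh t) dt`. -/
noncomputable def besselK0 (x : ℝ) : ℝ :=
  ∫ t in Set.Ioi (0 : ℝ), Real.exp (-x * Real.cosh t)

/-- The probability density `x ↦ K₀(|x|)/π` on ℝ. -/
noncomputable def besselDensity (x : ℝ) : ℝ := besselK0 |x| / Real.pi

open Set Filter Topology

/-!
Writing `K₀` as an integral and exchanging the order of integration gives the Laplace transform
`∫₀^∞ e^{-αx} K₀(x) dx = ∫₀^∞ dt / (α + cosh t)` for `|α| < 1`. The antiderivative
`(2/β) arctan ((eᵗ + α)/β)`, `β = √(1 - α²)`, evaluates this to `arccos α / β`, by the half-angle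
formula `tan (θ/2) = sin θ / (1 + cos θ)` at `θ = arccos α`. The density is even, so both
expectations are `2/π` times such Laplace transforms; for `cosh` the two arccosines add up to `π`.
-/

lemma add_cosh_pos {α : ℝ} (h : -1 < α) (t : ℝ) : 0 < α + cosh t := by
  linarith [one_le_cosh t]

lemma arctan_sqrt_one_sub_sq_div_one_add {α : ℝ} (h1 : -1 < α) (h2 : α ≤ 1) :
    arctan (√(1 - α ^ 2) / (1 + α)) = arccos α / 2 := by
  set θ := arccos α / 2 with hθ
  have hcos : cos (2 * θ) = α := by
    rw [mul_div_cancel₀ _ two_ne_zero, cos_arccos h1.le h2]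
  have hsin : sin (2 * θ) = √(1 - α ^ 2) := by rw [mul_div_cancel₀ _ two_ne_zero, sin_arccos]
  have hθ_lt : θ < π / 2 := by linarith [arccos_lt_pi.2 h1]
  have hcos_pos : 0 < cos θ :=
    cos_pos_of_mem_Ioo ⟨by linarith [arccos_nonneg α, pi_pos], hθ_lt⟩
  have htan : √(1 - α ^ 2) / (1 + α) = tan θ := by
    rw [← hsin, ← hcos, sin_two_mul, cos_two_mul, tan_eq_sin_div_cos]
    field_simp
    ring
  rw [htan, arctan_tan (by linarith [arccos_nonneg α, pi_pos]) hθ_lt]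

lemma hasDerivAt_arctan_exp_add_div {α : ℝ} (h1 : -1 < α) (h2 : α < 1) (t : ℝ) :
    HasDerivAt (fun t => 2 / √(1 - α ^ 2) * arctan ((exp t + α) / √(1 - α ^ 2)))
      (α + cosh t)⁻¹ t := by
  have hβ : 0 < √(1 - α ^ 2) := sqrt_pos.2 (by nlinarith)
  have hβ2 : √(1 - α ^ 2) ^ 2 = 1 - α ^ 2 := sq_sqrt (by nlinarith)
  refine ((((hasDerivAt_exp t).add_const α).div_const _).arctan.const_mul _).congr_deriv ?_
  have key : √(1 - α ^ 2) ^ 2 + (exp t + α) ^ 2 = 2 * exp t * (α + cosh t) := by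
    rw [hβ2, cosh_eq, exp_neg]
    field_simp
    ring
  have hpos := add_cosh_pos h1 t
  field_simp
  linear_combination -key

lemma tendsto_arctan_exp_add_div {α : ℝ} (h1 : -1 < α) (h2 : α < 1) :
    Tendsto (fun t => 2 / √(1 - α ^ 2) * arctan ((exp t + α) / √(1 - α ^ 2))) atTop
      (𝓝 (2 / √(1 - α ^ 2) * (π / 2))) := by
  have hβ : 0 < √(1 - α ^ 2) := sqrt_pos.2 (by nlinarith)
  refine (tendsto_nhds_of_tendsto_nhdsWithin tendsto_arctan_atTop).comp ?_ |>.const_mul _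
  exact (tendsto_exp_atTop.atTop_add tendsto_const_nhds).atTop_div_const hβ

lemma integrableOn_inv_add_cosh {α : ℝ} (h1 : -1 < α) (h2 : α < 1) :
    IntegrableOn (fun t => (α + cosh t)⁻¹) (Ioi 0) :=
  integrableOn_Ioi_deriv_of_nonneg' (fun t _ => hasDerivAt_arctan_exp_add_div h1 h2 t)
    (fun t _ => (inv_pos.2 (add_cosh_pos h1 t)).le) (tendsto_arctan_exp_add_div h1 h2)

lemma integral_inv_add_cosh {α : ℝ} (h1 : -1 < α) (h2 : α < 1) :
    ∫ t in Ioi 0, (α + cosh t)⁻¹ = arccos α / √(1 - α ^ 2) := by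
  have hβ : 0 < √(1 - α ^ 2) := sqrt_pos.2 (by nlinarith)
  rw [integral_Ioi_of_hasDerivAt_of_nonneg' (fun t _ => hasDerivAt_arctan_exp_add_div h1 h2 t)
    (fun t _ => (inv_pos.2 (add_cosh_pos h1 t)).le) (tendsto_arctan_exp_add_div h1 h2)]
  have hcompl := arctan_inv_of_pos (show 0 < √(1 - α ^ 2) / (1 + α) by
    have : 0 < 1 + α := by linarith
    positivity)
  rw [inv_div, arctan_sqrt_one_sub_sq_div_one_add h1 h2.le] at hcompl
  simp only [exp_zero, hcompl]
  field_simp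
  ring

lemma integral_exp_neg_mul_Ioi {c : ℝ} (hc : 0 < c) : ∫ x in Ioi 0, exp (-c * x) = c⁻¹ := by
  rw [integral_exp_mul_Ioi (neg_lt_zero.2 hc)]
  simp

lemma integrable_exp_neg_mul_add_cosh {α : ℝ} (h1 : -1 < α) (h2 : α < 1) :
    Integrable (fun p : ℝ × ℝ => exp (-(α + cosh p.2) * p.1))
      ((volume.restrict (Ioi 0)).prod (volume.restrict (Ioi 0))) := by
  refine (integrable_prod_iff' (by fun_prop)).2 ⟨.of_forall fun t => ?_, ?_⟩
  · exact integrableOn_exp_mul_Ioi (neg_lt_zero.2 (add_cosh_pos h1 t)) 0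
  · simp only [norm_eq_abs, abs_exp, integral_exp_neg_mul_Ioi (add_cosh_pos h1 _)]
    exact integrableOn_inv_add_cosh h1 h2

lemma exp_neg_mul_mul_besselK0 (α x : ℝ) :
    exp (-α * x) * besselK0 x = ∫ t in Ioi 0, exp (-(α + cosh t) * x) := by
  rw [besselK0, ← integral_const_mul]
  congr with t
  rw [← exp_add]
  ring_nf

lemma integrableOn_exp_neg_mul_mul_besselK0 {α : ℝ} (h1 : -1 < α) (h2 : α < 1) :
    IntegrableOn (fun x => exp (-α * x) * besselK0 x) (Ioi 0) := by
  simp only [IntegrableOn, exp_neg_mul_mul_besselK0]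
  exact (integrable_exp_neg_mul_add_cosh h1 h2).integral_prod_left

lemma integral_exp_neg_mul_mul_besselK0 {α : ℝ} (h1 : -1 < α) (h2 : α < 1) :
    ∫ x in Ioi 0, exp (-α * x) * besselK0 x = arccos α / √(1 - α ^ 2) := by
  simp only [exp_neg_mul_mul_besselK0]
  rw [integral_integral_swap (integrable_exp_neg_mul_add_cosh h1 h2)]
  simp only [integral_exp_neg_mul_Ioi (add_cosh_pos h1 _)]
  exact integral_inv_add_cosh h1 h2

lemma integral_cosh_mul_mul_besselK0 {α : ℝ} (h1 : -1 < α) (h2 : α < 1) :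
    ∫ x in Ioi 0, cosh (α * x) * besselK0 x = π / 2 / √(1 - α ^ 2) := by
  have hsplit (x : ℝ) : cosh (α * x) * besselK0 x =
      (exp (-(-α) * x) * besselK0 x + exp (-α * x) * besselK0 x) / 2 := by
    rw [cosh_eq]
    ring_nf
  have hneg₁ : -1 < -α := by linarith
  have hneg₂ : -α < 1 := by linarith
  simp only [hsplit]
  rw [integral_div, integral_add (integrableOn_exp_neg_mul_mul_besselK0 hneg₁ hneg₂)
    (integrableOn_exp_neg_mul_mul_besselK0 h1 h2), integral_exp_neg_mul_mul_besselK0 hneg₁ hneg₂,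
    integral_exp_neg_mul_mul_besselK0 h1 h2, neg_sq, arccos_neg]
  ring

lemma integral_comp_abs_mul_besselDensity (g : ℝ → ℝ) :
    ∫ x, g |x| * besselDensity x = 2 / π * ∫ x in Ioi 0, g x * besselK0 x := by
  simp only [besselDensity, ← mul_div_assoc, integral_div]
  rw [integral_comp_abs (f := fun x => g x * besselK0 x)]
  ring

theorem bessel_density_exp_cosh (α : ℝ) (hα : α ∈ Set.Ico (0 : ℝ) 1) :
    (∫ x : ℝ, Real.exp (-α * |x|) * besselDensity x) =
        (2 / Real.pi) * (Real.arccos α / Real.sqrt (1 - α ^ 2)) ∧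
      (∫ x : ℝ, Real.cosh (α * x) * besselDensity x) = 1 / Real.sqrt (1 - α ^ 2) := by
  have h1 : -1 < α := by linarith [hα.1]
  have hcosh : (fun x => cosh (α * x) * besselDensity x) =
      fun x => cosh (α * |x|) * besselDensity x := by
    ext x
    rw [← cosh_abs (α * x), ← cosh_abs (α * |x|), abs_mul, abs_mul, abs_abs]
  constructor
  · rw [integral_comp_abs_mul_besselDensity (fun y => exp (-α * y)),
      integral_exp_neg_mul_mul_besselK0 h1 hα.2]
  · rw [hcosh, integral_comp_abs_mul_besselDensity (fun y => cosh (α * y)),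
      integral_cosh_mul_mul_besselK0 h1 hα.2]
    field_simp
end

section
/- Let X be a real random variable with symmetric probability density f(x) = K₀(|x|)/π. Define m(α, ν) := E[tanh(αX + ν)·X] and let β := tanh(ν). Then m(α, ν) = (1 - β²) · E[ tanh(αX)·X / (1 - β² tanh(αX)²) ]. -/
/-!
Pair `x` with `-x`. As the density is even, `∫ g = ½ ∫ (g x + g (-x))` for
`g x = tanh (α x + ν) x f x`, and the addition formula for `tanh` turns
`tanh (α x + ν) - tanh (-α x + ν)` into `2 (1 - β²) tanh (α x) / (1 - β² tanh² (α x))`.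
The only analytic input is the integrability of `x K₀(|x|)`, which follows from
`x e^{-x cosh t} ≤ 4 e^{-x/2} e^{-t}`.
-/

open Real MeasureTheory

namespace Real

@[fun_prop]
theorem continuous_tanh : Continuous tanh := by
  simp only [funext tanh_eq_sinh_div_cosh]
  exact continuous_sinh.div continuous_cosh fun x => (cosh_pos x).ne'

theorem tanh_add (a b : ℝ) : tanh (a + b) = (tanh a + tanh b) / (1 + tanh a * tanh b) := by
  have hab : cosh a * cosh b + sinh a * sinh b ≠ 0 := cosh_add a b ▸ (cosh_pos _).ne'
  simp only [tanh_eq_sinh_div_cosh, sinh_add, cosh_add]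
  field_simp

theorem tanh_add_sub_tanh_neg_add (a b : ℝ) :
    tanh (a + b) - tanh (-a + b) =
      2 * (1 - tanh b ^ 2) * tanh a / (1 - tanh b ^ 2 * tanh a ^ 2) := by
  have hprod : |tanh a * tanh b| < 1 := by
    rw [abs_mul]
    exact mul_lt_one_of_nonneg_of_lt_one_left (abs_nonneg _) (abs_tanh_lt_one a)
      (abs_tanh_lt_one b).le
  obtain ⟨hlo, hhi⟩ := abs_lt.1 hprod
  have hp : 1 + tanh a * tanh b ≠ 0 := by linarith
  have hm : 1 + -tanh a * tanh b ≠ 0 := by linarith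
  rw [tanh_add, tanh_add, tanh_neg, div_sub_div _ _ hp hm]
  congr 1 <;> ring

end Real

theorem integral_tanh_mul_add_mul_eq_of_even {f : ℝ → ℝ} (hf_even : f.Even)
    (hf : Integrable fun x => x * f x) (α ν : ℝ) :
    (∫ x, tanh (α * x + ν) * x * f x) =
      (1 - tanh ν ^ 2) *
        ∫ x, tanh (α * x) * x / (1 - tanh ν ^ 2 * tanh (α * x) ^ 2) * f x := by
  set g : ℝ → ℝ := fun x => tanh (α * x + ν) * x * f x with hg_def
  have hg : Integrable g := by
    have hbdd := hf.bdd_mul (f := fun x => tanh (α * x + ν)) (c := 1)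
      (by fun_prop : Continuous _).aestronglyMeasurable
      (Filter.Eventually.of_forall fun x => (abs_tanh_lt_one _).le)
    simpa only [hg_def, mul_assoc] using hbdd
  have hg_symm (x : ℝ) : g x + g (-x) = 2 * ((1 - tanh ν ^ 2) *
      (tanh (α * x) * x / (1 - tanh ν ^ 2 * tanh (α * x) ^ 2) * f x)) := by
    have h := tanh_add_sub_tanh_neg_add (α * x) ν
    simp only [hg_def, hf_even x, mul_neg, neg_mul] at h ⊢
    rw [mul_div_assoc] at h
    linear_combination x * f x * h
  have h2 : 2 * ∫ x, g x = 2 * ((1 - tanh ν ^ 2) *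
      ∫ x, tanh (α * x) * x / (1 - tanh ν ^ 2 * tanh (α * x) ^ 2) * f x) := by
    calc 2 * ∫ x, g x = (∫ x, g x) + ∫ x, g (-x) := by rw [integral_neg_eq_self]; ring
      _ = ∫ x, (g x + g (-x)) := (integral_add hg hg.comp_neg).symm
      _ = _ := by simp only [hg_symm, integral_const_mul]
  exact mul_left_cancel₀ two_ne_zero h2

theorem integrable_comp_abs_of_integrableOn_Ioi {E : Type*} [NormedAddCommGroup E] {f : ℝ → E}
    (hf : IntegrableOn f (Set.Ioi 0)) : Integrable fun x => f |x| := by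
  have hIoi : IntegrableOn (fun x => f |x|) (Set.Ioi 0) :=
    hf.congr_fun (fun x hx => by rw [abs_of_pos hx]) measurableSet_Ioi
  have hIic : IntegrableOn (fun x => f |x|) (Set.Iic 0) := by
    rw [← neg_zero] at hIoi
    simpa only [abs_neg] using
      (integrableOn_Iic_iff_integrableOn_Iio (μ := volume)).mpr hIoi.comp_neg_Iio
  simpa only [Set.Iic_union_Ioi, integrableOn_univ] using hIic.union hIoi

theorem integrable_exp_neg_abs_div_two : Integrable fun x : ℝ => exp (-|x| / 2) :=
  integrable_comp_abs_of_integrableOn_Ioi (f := fun x => exp (-x / 2)) <|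
    (exp_neg_integrableOn_Ioi 0 one_half_pos).congr_fun (fun x _ => by ring_nf) measurableSet_Ioi

theorem besselK0_nonneg (x : ℝ) : 0 ≤ besselK0 x :=
  integral_nonneg fun _ => (exp_pos _).le

theorem measurable_besselK0 : Measurable besselK0 :=
  ((by fun_prop : Continuous fun p : ℝ × ℝ => exp (-p.1 * cosh p.2)).stronglyMeasurable
    |>.integral_prod_right').measurable

theorem besselDensity_neg (x : ℝ) : besselDensity (-x) = besselDensity x := by
  rw [besselDensity, besselDensity, abs_neg]

theorem mul_exp_neg_mul_cosh_le {x : ℝ} (hx : 0 ≤ x) (t : ℝ) :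
    x * exp (-x * cosh t) ≤ 4 * exp (-x / 2) * exp (-t) := by
  -- average of `1 ≤ cosh t` and `exp t / 2 ≤ cosh t`
  have hcosh : 1 / 2 + exp t / 4 ≤ cosh t := by
    nlinarith [one_le_cosh t, cosh_eq t, exp_pos (-t)]
  set u := x * exp t / 4 with hu_def
  have hu : u * exp (-u) ≤ 1 :=
    (mul_exp_neg_le_exp_neg_one u).trans (exp_le_one_iff.2 (by norm_num))
  calc x * exp (-x * cosh t) ≤ x * exp (-x / 2 + -u) := by
        gcongr; nlinarith [mul_le_mul_of_nonneg_left hcosh hx]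
    _ = 4 * exp (-x / 2) * exp (-t) * (u * exp (-u)) := by
        rw [exp_add, exp_neg t, hu_def]; field_simp
    _ ≤ 4 * exp (-x / 2) * exp (-t) := mul_le_of_le_one_right (by positivity) hu

theorem mul_besselK0_le {x : ℝ} (hx : 0 ≤ x) : x * besselK0 x ≤ 4 * exp (-x / 2) := by
  have hdom : IntegrableOn (fun t => 4 * exp (-x / 2) * exp (-t)) (Set.Ioi 0) :=
    (integrableOn_exp_neg_Ioi 0).const_mul _
  calc x * besselK0 x = ∫ t in Set.Ioi (0 : ℝ), x * exp (-x * cosh t) := by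
        rw [besselK0, integral_const_mul]
    _ ≤ ∫ t in Set.Ioi (0 : ℝ), 4 * exp (-x / 2) * exp (-t) :=
        integral_mono_of_nonneg (Filter.Eventually.of_forall fun t => by positivity) hdom
          (Filter.Eventually.of_forall (mul_exp_neg_mul_cosh_le hx))
    _ = 4 * exp (-x / 2) := by rw [integral_const_mul, integral_exp_neg_Ioi_zero, mul_one]

theorem integrable_mul_besselDensity : Integrable fun x => x * besselDensity x := by
  have hmeas : Measurable fun x => x * besselDensity x :=
    measurable_id.mul ((measurable_besselK0.comp measurable_abs).div_const π)
  refine (integrable_exp_neg_abs_div_two.const_mul (4 / π)).mono' hmeas.aestronglyMeasurable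
    (Filter.Eventually.of_forall fun x => ?_)
  calc ‖x * besselDensity x‖ = |x| * besselK0 |x| / π := by
        rw [besselDensity, norm_mul, norm_div, Real.norm_eq_abs, Real.norm_of_nonneg
          (besselK0_nonneg _), Real.norm_of_nonneg pi_pos.le, mul_div_assoc]
    _ ≤ 4 * exp (-|x| / 2) / π :=
        div_le_div_of_nonneg_right (mul_besselK0_le (abs_nonneg x)) pi_pos.le
    _ = 4 / π * exp (-|x| / 2) := by ring

theorem bessel_m_identity (α ν : ℝ) :
    (∫ x : ℝ, Real.tanh (α * x + ν) * x * besselDensity x) =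
      (1 - Real.tanh ν ^ 2) *
        ∫ x : ℝ, (Real.tanh (α * x) * x / (1 - Real.tanh ν ^ 2 * Real.tanh (α * x) ^ 2)) *
          besselDensity x :=
  integral_tanh_mul_add_mul_eq_of_even besselDensity_neg integrable_mul_besselDensity α ν
end

section
/- Let (αₜ)ₜ≥0 be a sequence of positive reals with α₀ ∈ (0, 0.31) satisfying αₜ₊₁ ≤ αₜ - 3αₜ³/(1 + 8αₜ) for all t ≥ 0 (so in particular 0 < αₜ₊₁ ≤ αₜ). Then for every t ≥ 0, αₜ ≤ 1 / (√(6t + (8 + 1/α₀)²) - 8). -/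
open Real

/-!
With `βₜ = 8 + 1/αₜ`, the recursion gives `βₜ₊₁ ≥ βₜ + 3/βₜ`, because
`(1/a + 3a/(1+8a)) (a - 3a³/(1+8a)) = 1 - 9a⁴/(1+8a)² ≤ 1`. Squaring, `βₜ₊₁² ≥ βₜ² + 6`, so
`βₜ ≥ √(6t + β₀²)`, which is the claimed bound on `αₜ = 1/(βₜ - 8)`.
-/

lemma one_div_add_le_one_div_of_le_sub {a a' : ℝ} (ha : 0 < a) (ha' : 0 < a')
    (h : a' ≤ a - 3 * a ^ 3 / (1 + 8 * a)) : 1 / a + 3 / (8 + 1 / a) ≤ 1 / a' := by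
  have hprod : (1 / a + 3 / (8 + 1 / a)) * (a - 3 * a ^ 3 / (1 + 8 * a)) ≤ 1 := by
    field_simp
    nlinarith [pow_pos ha 4]
  rw [le_div_iff₀ ha']
  nlinarith [mul_le_mul_of_nonneg_left h (by positivity : (0 : ℝ) ≤ 1 / a + 3 / (8 + 1 / a))]

lemma sq_add_two_mul_le_sq_add_div (b c : ℝ) (hb : b ≠ 0) : b ^ 2 + 2 * c ≤ (b + c / b) ^ 2 := by
  have hsq : (b + c / b) ^ 2 = b ^ 2 + 2 * c + (c / b) ^ 2 := by field_simp; ring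
  nlinarith [sq_nonneg (c / b)]

lemma sq_add_six_le_sq_of_le_sub {a a' : ℝ} (ha : 0 < a) (ha' : 0 < a')
    (h : a' ≤ a - 3 * a ^ 3 / (1 + 8 * a)) : (8 + 1 / a) ^ 2 + 6 ≤ (8 + 1 / a') ^ 2 := by
  have hβ : 0 < 8 + 1 / a := by positivity
  calc (8 + 1 / a) ^ 2 + 6 = (8 + 1 / a) ^ 2 + 2 * 3 := by norm_num
    _ ≤ (8 + 1 / a + 3 / (8 + 1 / a)) ^ 2 := sq_add_two_mul_le_sq_add_div _ _ hβ.ne'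
    _ ≤ (8 + 1 / a') ^ 2 := pow_le_pow_left₀ (by positivity)
      (by linarith [one_div_add_le_one_div_of_le_sub ha ha' h]) 2

theorem sublinear_upper_bound_general (α : ℕ → ℝ)
    (hpos : ∀ t, 0 < α t)
    (hrec : ∀ t, α (t + 1) ≤ α t - 3 * (α t) ^ 3 / (1 + 8 * α t)) :
    ∀ t : ℕ, α t ≤ 1 / (Real.sqrt (6 * t + (8 + 1 / α 0) ^ 2) - 8) := by
  have hsq : ∀ t : ℕ, 6 * t + (8 + 1 / α 0) ^ 2 ≤ (8 + 1 / α t) ^ 2 := by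
    intro t
    induction t with
    | zero => simp
    | succ n ih =>
      push_cast
      linarith [sq_add_six_le_sq_of_le_sub (hpos n) (hpos (n + 1)) (hrec n)]
  intro t
  have h8 : 8 < √(6 * t + (8 + 1 / α 0) ^ 2) := by
    have := hpos 0
    rw [Real.lt_sqrt (by norm_num)]
    nlinarith [one_div_pos.mpr this, (Nat.cast_nonneg t : (0 : ℝ) ≤ t)]
  have hle : √(6 * t + (8 + 1 / α 0) ^ 2) ≤ 8 + 1 / α t :=
    Real.sqrt_le_iff.mpr ⟨by have := hpos t; positivity, hsq t⟩
  rw [le_one_div (hpos t) (by linarith)]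
  linarith

theorem sublinear_upper_bound (α : ℕ → ℝ)
    (h0 : α 0 ∈ Set.Ioo (0 : ℝ) 0.31)
    (hpos : ∀ t, 0 < α t)
    (hrec : ∀ t, α (t + 1) ≤ α t - 3 * (α t) ^ 3 / (1 + 8 * α t)) :
    ∀ t : ℕ, α t ≤ 1 / (Real.sqrt (6 * t + (8 + 1 / α 0) ^ 2) - 8) :=
  sublinear_upper_bound_general α hpos hrec
end

section
/- Let (αₜ)ₜ≥0 be a sequence of reals with α₀ ∈ (0, 0.31) satisfying αₜ - 3αₜ³ ≤ αₜ₊₁ ≤ αₜ and αₜ > 0 for all t. Then for every t ≥ 0, αₜ ≥ 1 / √(6t + 22·ln(1.2t + 1) + (1/α₀)²). -/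
/-!
In the variable `b = 1 / α²` the recursion `α' ≥ α - 3α³` becomes `b' ≤ b + 6 + 54 / b` as long as
`α² ≤ 1/10`. The map `b ↦ b + 6 + 54 / b` is monotone for `b ≥ 8`, so `b` stays below any sequence
that the map pushes up, and `6t + 22 ln(1.2t + 1) + b₀` is one: its `log` term grows by at least
`26.4 / (1.2t + 2.2)` per step, which dominates `54 / (6t + b₀)`.
-/

open Real

theorem MonotoneOn.seq_le_seq {α : Type*} [Preorder α] {f : α → α} {s : Set α} {x y : ℕ → α}
    (hf : MonotoneOn f s) (hxs : ∀ n, x n ∈ s) (hys : ∀ n, y n ∈ s) (h₀ : x 0 ≤ y 0)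
    (hx : ∀ n, x (n + 1) ≤ f (x n)) (hy : ∀ n, f (y n) ≤ y (n + 1)) (n : ℕ) : x n ≤ y n := by
  induction n with
  | zero => exact h₀
  | succ n ih => exact (hx n).trans ((hf (hxs n) (hys n) ih).trans (hy n))

theorem Real.div_le_log_sub_log {x y : ℝ} (hx : 0 < x) (hy : 0 < y) :
    (y - x) / y ≤ log y - log x := by
  calc (y - x) / y = 1 - (y / x)⁻¹ := by field_simp
    _ ≤ log (y / x) := one_sub_inv_le_log_of_pos (div_pos hy hx)
    _ = log y - log x := log_div hy.ne' hx.ne'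

theorem one_div_sqrt_le_of_one_div_sq_le {a x : ℝ} (ha : 0 < a) (h : (1 / a) ^ 2 ≤ x) :
    1 / √x ≤ a := by
  have hsqrt : 1 / a ≤ √x := le_sqrt_of_sq_le h
  calc 1 / √x ≤ 1 / (1 / a) := one_div_le_one_div_of_le (by positivity) hsqrt
    _ = a := one_div_one_div a

noncomputable def cubicStepMajorant (b : ℝ) : ℝ := b + 6 + 54 / b

theorem one_div_sq_le_cubicStepMajorant {a a' : ℝ} (ha : 0 < a) (ha2 : a ^ 2 ≤ 1 / 10)
    (h : a - 3 * a ^ 3 ≤ a') : (1 / a') ^ 2 ≤ cubicStepMajorant ((1 / a) ^ 2) := by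
  have hfactor : 0 < 1 - 3 * a ^ 2 := by linarith
  have hlow : a * (1 - 3 * a ^ 2) ≤ a' := by linarith
  have ha' : 0 < a' := (by positivity : 0 < a * (1 - 3 * a ^ 2)).trans_le hlow
  calc (1 / a') ^ 2 ≤ (1 / (a * (1 - 3 * a ^ 2))) ^ 2 := by gcongr
    _ ≤ cubicStepMajorant ((1 / a) ^ 2) := by
      unfold cubicStepMajorant
      rw [div_pow, div_le_iff₀ (by positivity)]
      field_simp
      -- `(1 + 6s + 54s²)(1 - 3s)² - 1 = 27s²(1 - 10s + 18s²)` with `s = a²`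
      nlinarith [pow_pos ha 4, mul_nonneg (pow_pos ha 4).le (sub_nonneg.2 ha2)]

theorem cubicStepMajorant_monotoneOn : MonotoneOn cubicStepMajorant (Set.Ici 8) := by
  intro x (hx : 8 ≤ x) y (hy : 8 ≤ y) hxy
  unfold cubicStepMajorant
  have : 54 / x - 54 / y ≤ y - x := by
    rw [div_sub_div _ _ (by positivity) (by positivity), div_le_iff₀ (by positivity)]
    nlinarith [mul_le_mul hx hy (by norm_num) (by positivity)]
  linarith

noncomputable def sublinearEnvelope (c : ℝ) (t : ℕ) : ℝ := 6 * t + 22 * log (1.2 * t + 1) + c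

theorem le_sublinearEnvelope (c : ℝ) (t : ℕ) : c ≤ sublinearEnvelope c t := by
  have : 0 ≤ log (1.2 * t + 1) := log_nonneg (le_add_of_nonneg_left (by positivity))
  unfold sublinearEnvelope
  linarith [(t.cast_nonneg : (0 : ℝ) ≤ t)]

theorem cubicStepMajorant_sublinearEnvelope_le {c : ℝ} (hc : 8 ≤ c) (t : ℕ) :
    cubicStepMajorant (sublinearEnvelope c t) ≤ sublinearEnvelope c (t + 1) := by
  have ht : (0 : ℝ) ≤ t := t.cast_nonneg
  have hlog_nonneg : 0 ≤ log (1.2 * t + 1) := log_nonneg (le_add_of_nonneg_left (by positivity))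
  have hlog_step : 1.2 / (1.2 * t + 2.2) ≤ log (1.2 * (t + 1) + 1) - log (1.2 * t + 1) := by
    have h := Real.div_le_log_sub_log (x := 1.2 * t + 1) (y := 1.2 * (t + 1) + 1)
      (by positivity) (by positivity)
    convert h using 1
    ring_nf
  have hE : 6 * t + c ≤ sublinearEnvelope c t := by unfold sublinearEnvelope; linarith
  have h54 : 54 / sublinearEnvelope c t ≤ 22 * (1.2 / (1.2 * t + 2.2)) := by
    rw [mul_div_assoc', div_le_div_iff₀ (by linarith) (by positivity)]
    nlinarith
  unfold cubicStepMajorant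
  unfold sublinearEnvelope at h54 ⊢
  push_cast
  linarith

theorem sublinear_lower_bound (α : ℕ → ℝ)
    (h0 : α 0 ∈ Set.Ioo (0 : ℝ) 0.31)
    (hpos : ∀ t, 0 < α t)
    (hlow : ∀ t, α t - 3 * (α t) ^ 3 ≤ α (t + 1))
    (hmono : ∀ t, α (t + 1) ≤ α t) :
    ∀ t : ℕ, 1 / Real.sqrt (6 * t + 22 * Real.log (1.2 * t + 1) + (1 / α 0) ^ 2) ≤ α t := by
  obtain ⟨hα0_pos, hα0_lt⟩ := h0
  have hle : ∀ t, α t ≤ α 0 := fun t => antitone_nat_of_succ_le hmono t.zero_le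
  have hsmall : ∀ t, α t ^ 2 ≤ 1 / 10 := fun t => by nlinarith [hpos t, hle t]
  have hb_ge : ∀ t, (1 / α 0) ^ 2 ≤ (1 / α t) ^ 2 := fun t =>
    pow_le_pow_left₀ (by positivity) (one_div_le_one_div_of_le (hpos t) (hle t)) 2
  have hb0 : 8 ≤ (1 / α 0) ^ 2 := by
    have : 1 / 0.31 ≤ 1 / α 0 := one_div_le_one_div_of_le hα0_pos hα0_lt.le
    nlinarith
  have hcmp := cubicStepMajorant_monotoneOn.seq_le_seq
    (x := fun t => (1 / α t) ^ 2) (y := sublinearEnvelope ((1 / α 0) ^ 2))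
    (fun t => hb0.trans (hb_ge t)) (fun t => hb0.trans (le_sublinearEnvelope _ t))
    (le_sublinearEnvelope _ 0)
    (fun t => one_div_sq_le_cubicStepMajorant (hpos t) (hsmall t) (hlow t))
    (cubicStepMajorant_sublinearEnvelope_le hb0)
  exact fun t => one_div_sqrt_le_of_one_div_sq_le (hpos t) (hcmp t)
end
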